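/- arXiv:2510.19933 — 3 statements merged into one kernel-verified Lean document; each statement's English description precedes it below -/
import Mathlib

section
/- Suppose f : X → ℝ is continuously differentiable, bounded below by f*, and its gradient is L-Lipschitz with respect to norm ‖·‖ (i.e., ‖∇f(x) - ∇f(y)‖⋆ ≤ L‖x - y‖ for all x, y). Let x^{k+1} = x^k + γ_k d̂^k where d̂^k is an inexact LMO output for ∇f(x^k) with error δ_k ≥ 0. Then f(x^{k+1}) ≤ f(x^k) - γ_k ‖∇f(x^k)‖⋆ (1 - δ_k) + (L/2) γ_k² (1 + δ_k)². -/
open scoped InnerProductSpace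

theorem le_one_add_of_sub_le {E : Type*} [AddCommGroup E] {N : E → ℝ}
    (hN_tri : ∀ v w, N (v + w) ≤ N v + N w) {d dhat : E} {δ : ℝ} (hd : N d ≤ 1) (hdhat : N (dhat - d) ≤ δ) : N dhat ≤ 1 + δ :=
  calc N dhat = N (d + (dhat - d)) := by rw [add_sub_cancel]
    _ ≤ 1 + δ := (hN_tri _ _).trans (add_le_add hd hdhat)

section InexactLMO

variable {X : Type*} [NormedAddCommGroup X] [InnerProductSpace ℝ X]

/-- `s` plays the role of the dual norm of `G`, and `d` of the exact LMO direction. -/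
theorem inner_le_neg_mul_one_sub_of_lmo {N : X → ℝ} {G d dhat : X} {s δ : ℝ} (hs : 0 ≤ s)
    (hdual : ∀ v, ⟪G, v⟫_ℝ ≤ s * N v) (hlmo : ⟪G, d⟫_ℝ = -s) (hdhat : N (dhat - d) ≤ δ) :
    ⟪G, dhat⟫_ℝ ≤ -s * (1 - δ) :=
  calc ⟪G, dhat⟫_ℝ = ⟪G, d⟫_ℝ + ⟪G, dhat - d⟫_ℝ := by rw [← inner_add_right, add_sub_cancel]
    _ ≤ -s + s * N (dhat - d) := by rw [hlmo]; exact add_le_add_right (hdual _) _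
    _ ≤ -s * (1 - δ) := by nlinarith [mul_le_mul_of_nonneg_left hdhat hs]

theorem le_add_mul_inner_add_of_quadratic_bound {N f : X → ℝ} {x G : X} {L : ℝ}
    (hsmooth : ∀ y, f y ≤ f x + ⟪G, y - x⟫_ℝ + L / 2 * N (y - x) ^ 2)
    (hN_smul : ∀ (c : ℝ) (v : X), N (c • v) = |c| * N v) (v : X) (γ : ℝ) :
    f (x + γ • v) ≤ f x + γ * ⟪G, v⟫_ℝ + L / 2 * γ ^ 2 * N v ^ 2 := by
  have h := hsmooth (x + γ • v)
  rwa [add_sub_cancel_left, real_inner_smul_right, hN_smul, mul_pow, sq_abs, ← mul_assoc] at h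

end InexactLMO

theorem stmt2_general {X : Type*} [NormedAddCommGroup X] [InnerProductSpace ℝ X]
    (N Nd : X → ℝ) (f : X → ℝ) (g : X → X) (L : ℝ) (hL : 0 ≤ L)
    (hsmooth : ∀ x y : X,
      f y ≤ f x + (inner ℝ (g x) (y - x) : ℝ) + L / 2 * (N (y - x)) ^ 2)
    (hN_nonneg : ∀ v : X, 0 ≤ N v)
    (hN_smul : ∀ (c : ℝ) (v : X), N (c • v) = |c| * N v)
    (hN_tri : ∀ v w : X, N (v + w) ≤ N v + N w)
    (x d dhat : X) (γ δ : ℝ) (hγ : 0 < γ)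
    (hNd_nonneg : 0 ≤ Nd (g x))
    (hdual : ∀ v : X, (inner ℝ (g x) v : ℝ) ≤ Nd (g x) * N v)
    (hlmo : (inner ℝ (g x) d : ℝ) = -Nd (g x)) (hd : N d ≤ 1)
    (hdhat : N (dhat - d) ≤ δ) :
    f (x + γ • dhat) ≤
      f x - γ * Nd (g x) * (1 - δ) + L / 2 * γ ^ 2 * (1 + δ) ^ 2 := by
  have hinner : ⟪g x, dhat⟫_ℝ ≤ -Nd (g x) * (1 - δ) :=
    inner_le_neg_mul_one_sub_of_lmo hNd_nonneg hdual hlmo hdhat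
  have hnorm_sq : N dhat ^ 2 ≤ (1 + δ) ^ 2 :=
    pow_le_pow_left₀ (hN_nonneg dhat) (le_one_add_of_sub_le hN_tri hd hdhat) 2
  calc f (x + γ • dhat) ≤ f x + γ * ⟪g x, dhat⟫_ℝ + L / 2 * γ ^ 2 * N dhat ^ 2 :=
        le_add_mul_inner_add_of_quadratic_bound (hsmooth x) hN_smul dhat γ
    _ ≤ f x + γ * (-Nd (g x) * (1 - δ)) + L / 2 * γ ^ 2 * (1 + δ) ^ 2 := by
        gcongr
    _ = f x - γ * Nd (g x) * (1 - δ) + L / 2 * γ ^ 2 * (1 + δ) ^ 2 := by ring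

/-- Per-iteration descent inequality for the deterministic inexact LMO method:
for an `L`-smooth `f` (quadratic upper bound w.r.t. an arbitrary norm `N` with
dual norm `Nd`), if `d` is the exact LMO direction for the gradient `g x`
and `N (d̂ - d) ≤ δ`, then the step `x⁺ = x + γ d̂` satisfies
`f(x⁺) ≤ f(x) - γ ‖∇f(x)‖⋆ (1-δ) + (L/2) γ² (1+δ)²`. -/
theorem stmt2 {X : Type*} [NormedAddCommGroup X] [InnerProductSpace ℝ X]
    (N Nd : X → ℝ) (f : X → ℝ) (g : X → X) (L : ℝ) (hL : 0 ≤ L)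
    (hsmooth : ∀ x y : X,
      f y ≤ f x + (inner ℝ (g x) (y - x) : ℝ) + L / 2 * (N (y - x)) ^ 2)
    (hN_nonneg : ∀ v : X, 0 ≤ N v)
    (hN_smul : ∀ (c : ℝ) (v : X), N (c • v) = |c| * N v)
    (hN_tri : ∀ v w : X, N (v + w) ≤ N v + N w)
    (x d dhat : X) (γ δ : ℝ) (hγ : 0 < γ) (hδ : 0 ≤ δ)
    (hNd_nonneg : 0 ≤ Nd (g x))
    (hdual : ∀ v : X, (inner ℝ (g x) v : ℝ) ≤ Nd (g x) * N v)
    (hlmo : (inner ℝ (g x) d : ℝ) = -Nd (g x)) (hd : N d ≤ 1)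
    (hdhat : N (dhat - d) ≤ δ) :
    f (x + γ • dhat) ≤
      f x - γ * Nd (g x) * (1 - δ) + L / 2 * γ ^ 2 * (1 + δ) ^ 2 :=
  stmt2_general N Nd f g L hL hsmooth hN_nonneg hN_smul hN_tri x d dhat γ δ hγ hNd_nonneg hdual hlmo
    hd hdhat
end

section
/- Under the constant-parameter descent inequality f(x^{k+1}) ≤ f(x^k) - γ‖∇f(x^k)‖⋆(1-δ) + (L/2)γ²(1+δ)² for all k < K, with δ ∈ [0,1), γ > 0, and f bounded below by f*, the average gradient norm satisfies (1/K) Σ_{k=0}^{K-1} ‖∇f(x^k)‖⋆ ≤ Δ⁰ / (Kγ(1-δ)) + Lγ(1+δ)² / (2(1-δ)). -/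
open Finset

theorem sum_le_of_le_sub_add {α : Type*} [AddCommGroup α] [PartialOrder α]
    [IsOrderedAddMonoid α] {u a : ℕ → α} {c : α} {n : ℕ}
    (h : ∀ k < n, u (k + 1) ≤ u k - a k + c) :
    ∑ k ∈ range n, a k ≤ u 0 - u n + n • c :=
  calc ∑ k ∈ range n, a k
      ≤ ∑ k ∈ range n, (u k - u (k + 1) + c) :=
        sum_le_sum fun k hk => by
          have := h k (mem_range.mp hk)
          rw [sub_add_eq_add_sub, le_sub_iff_add_le'] at this
          rwa [sub_add_eq_add_sub, le_sub_iff_add_le]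
    _ = u 0 - u n + n • c := by
        rw [sum_add_distrib, sum_range_sub', sum_const, card_range]

theorem stmt4_general (K : ℕ) (hK : 0 < K) (L fstar γ δ : ℝ)
    (hγ : 0 < γ) (hδ1 : δ < 1)
    (φ G : ℕ → ℝ)
    (hdesc : ∀ k < K,
      φ (k + 1) ≤ φ k - γ * G k * (1 - δ) + L / 2 * γ ^ 2 * (1 + δ) ^ 2)
    (hlb : ∀ k, fstar ≤ φ k) :
    (1 / (K : ℝ)) * ∑ k ∈ Finset.range K, G k ≤
      (φ 0 - fstar) / ((K : ℝ) * γ * (1 - δ)) + L * γ * (1 + δ) ^ 2 / (2 * (1 - δ)) := by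
  have hK' : (0 : ℝ) < K := by exact_mod_cast hK
  have hδ' : 0 < 1 - δ := by linarith
  have htel := sum_le_of_le_sub_add (u := φ) (a := fun k => γ * (1 - δ) * G k)
    (c := L / 2 * γ ^ 2 * (1 + δ) ^ 2) fun k hk => by
    linarith [hdesc k hk]
  rw [← mul_sum, nsmul_eq_mul] at htel
  have hsum : γ * (1 - δ) * ∑ k ∈ range K, G k ≤
      φ 0 - fstar + K * (L / 2 * γ ^ 2 * (1 + δ) ^ 2) := by
    linarith [hlb K]
  calc (1 / (K : ℝ)) * ∑ k ∈ range K, G k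
      = (γ * (1 - δ) * ∑ k ∈ range K, G k) / (K * γ * (1 - δ)) := by
        field_simp
    _ ≤ (φ 0 - fstar + K * (L / 2 * γ ^ 2 * (1 + δ) ^ 2)) / (K * γ * (1 - δ)) :=
        div_le_div_of_nonneg_right hsum (by positivity)
    _ = _ := by
        field_simp

/-- Constant-parameter deterministic bound: under the per-iteration descent
inequality with constant step size `γ` and inexactness `δ ∈ [0,1)`, the average
dual gradient norm satisfies
`(1/K) Σ_{k<K} ‖∇f(x^k)‖⋆ ≤ Δ⁰/(Kγ(1-δ)) + Lγ(1+δ)²/(2(1-δ))`. -/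
theorem stmt4 (K : ℕ) (hK : 0 < K) (L fstar γ δ : ℝ)
    (hγ : 0 < γ) (hδ0 : 0 ≤ δ) (hδ1 : δ < 1)
    (φ G : ℕ → ℝ) (hGnn : ∀ k, 0 ≤ G k)
    (hdesc : ∀ k < K,
      φ (k + 1) ≤ φ k - γ * G k * (1 - δ) + L / 2 * γ ^ 2 * (1 + δ) ^ 2)
    (hlb : ∀ k, fstar ≤ φ k) :
    (1 / (K : ℝ)) * ∑ k ∈ Finset.range K, G k ≤
      (φ 0 - fstar) / ((K : ℝ) * γ * (1 - δ)) + L * γ * (1 + δ) ^ 2 / (2 * (1 - δ)) :=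
  stmt4_general K hK L fstar γ δ hγ hδ1 φ G hdesc hlb
end

section
/- Suppose for each k < K the iterates satisfy f(x^{k+1}) ≤ f(x^k) - ‖∇f(x^k)‖⋆²(1-δ_k)²/(2L(1+δ_k)²), where f is bounded below by f* and δ_k ∈ [0,1). Then min_{0 ≤ j < K} ‖∇f(x^j)‖⋆² ≤ 2LΔ⁰ / (Σ_{k=0}^{K-1} (1-δ_k)²/(1+δ_k)²), where Δ⁰ = f(x⁰) - f*. -/
/-! Telescoping the descent inequality bounds `∑ₖ wₖ Gₖ²` by `2LΔ⁰`, with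
`wₖ = (1 - δₖ)² / (1 + δₖ)²`, and a minimum is at most any weighted average. -/

open Finset

theorem sum_range_le_sub_of_le_sub_succ {α : Type*} [AddCommGroup α] [PartialOrder α]
    [IsOrderedAddMonoid α] {a b : ℕ → α} {n : ℕ} (h : ∀ k < n, a (k + 1) ≤ a k - b k) :
    ∑ k ∈ range n, b k ≤ a 0 - a n :=
  calc ∑ k ∈ range n, b k ≤ ∑ k ∈ range n, (a k - a (k + 1)) :=
        sum_le_sum fun k hk => le_sub_comm.mp (h k (mem_range.mp hk))
    _ = a 0 - a n := sum_range_sub' a n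

theorem inf'_mul_sum_le_sum_mul {ι R : Type*} [Semiring R] [LinearOrder R] [IsOrderedRing R]
    {s : Finset ι} (hs : s.Nonempty) {f w : ι → R} (hw : ∀ i ∈ s, 0 ≤ w i) :
    s.inf' hs f * ∑ i ∈ s, w i ≤ ∑ i ∈ s, f i * w i := by
  rw [mul_sum]
  exact sum_le_sum fun i hi => mul_le_mul_of_nonneg_right (inf'_le f hi) (hw i hi)

theorem inf'_le_div_of_sum_mul_le {ι R : Type*} [Field R] [LinearOrder R] [IsStrictOrderedRing R]
    {s : Finset ι} (hs : s.Nonempty) {f w : ι → R} {C : R} (hw : ∀ i ∈ s, 0 ≤ w i)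
    (hW : 0 < ∑ i ∈ s, w i) (h : ∑ i ∈ s, f i * w i ≤ C) :
    s.inf' hs f ≤ C / ∑ i ∈ s, w i :=
  (le_div_iff₀ hW).2 ((inf'_mul_sum_le_sum_mul hs hw).trans h)

/-- Adaptive step size convergence: if for each `k < K` the iterates satisfy
`f(x^{k+1}) ≤ f(x^k) - ‖∇f(x^k)‖⋆²(1-δ_k)²/(2L(1+δ_k)²)` with `f` bounded below,
then `min_{j<K} ‖∇f(x^j)‖⋆² ≤ 2LΔ⁰ / Σ_{k<K} (1-δ_k)²/(1+δ_k)²`. -/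
theorem stmt7 (K : ℕ) (hK : 0 < K) (L fstar : ℝ) (hL : 0 < L)
    (φ G δ : ℕ → ℝ) (hδ0 : ∀ k, 0 ≤ δ k) (hδ1 : ∀ k, δ k < 1)
    (hdesc : ∀ k < K,
      φ (k + 1) ≤ φ k - (G k) ^ 2 * (1 - δ k) ^ 2 / (2 * L * (1 + δ k) ^ 2))
    (hlb : ∀ k, fstar ≤ φ k) :
    (Finset.range K).inf' (by simp [Finset.nonempty_range_iff]; omega)
        (fun j => (G j) ^ 2) ≤
      2 * L * (φ 0 - fstar) /
        (∑ k ∈ Finset.range K, (1 - δ k) ^ 2 / (1 + δ k) ^ 2) := by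
  set w : ℕ → ℝ := fun k => (1 - δ k) ^ 2 / (1 + δ k) ^ 2
  have hw : ∀ k, 0 < w k := fun k =>
    div_pos (pow_pos (by linarith [hδ1 k]) 2) (pow_pos (by linarith [hδ0 k]) 2)
  have hstep : ∀ k < K, 2 * L * φ (k + 1) ≤ 2 * L * φ k - G k ^ 2 * w k := fun k hk => by
    have : 1 + δ k ≠ 0 := by linarith [hδ0 k]
    calc 2 * L * φ (k + 1)
        ≤ 2 * L * (φ k - G k ^ 2 * (1 - δ k) ^ 2 / (2 * L * (1 + δ k) ^ 2)) := by
          gcongr; exact hdesc k hk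
      _ = 2 * L * φ k - G k ^ 2 * w k := by simp only [w]; field_simp
  have hsum := sum_range_le_sub_of_le_sub_succ (a := fun k => 2 * L * φ k)
    (b := fun k => G k ^ 2 * w k) hstep
  have hφK := mul_le_mul_of_nonneg_left (hlb K) (by positivity : (0 : ℝ) ≤ 2 * L)
  exact inf'_le_div_of_sum_mul_le _ (fun k _ => (hw k).le)
    (sum_pos (fun k _ => hw k) (nonempty_range_iff.mpr hK.ne')) (by linarith)
end
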